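/- For every m ∈ ℕ and every list L of natural numbers sorted in (weakly) descending order with all elements ≤ m, the list next_m L is also sorted in descending order with all elements ≤ m. -/

import Mathlib

def next (m : ℕ) : List ℕ → List ℕ
  | [] => [0]
  | h :: t =>
    if h < m then (h + 1) :: t
    else
      match next m t with
      | [] => []
      | x :: t' => x :: x :: t'

def lgen (m : ℕ) : ℕ → List ℕ
  | 0 => []
  | n + 1 => next m (lgen m n)

theorem pairwise_ge_next (m : ℕ) {L : List ℕ} (hL : L.Pairwise (· ≥ ·)) :
    (next m L).Pairwise (· ≥ ·) := by
  fun_induction next m L with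
  | case1 => simp
  | case2 h t _ =>
    obtain ⟨hh, ht⟩ := List.pairwise_cons.1 hL
    exact ht.cons fun b hb => Nat.le_succ_of_le (hh b hb)
  | case3 => simp
  | case4 h t _ x t' hnt ih =>
    have hxt : (x :: t').Pairwise (· ≥ ·) := hnt ▸ ih hL.of_cons
    exact hxt.cons (List.forall_mem_cons.2 ⟨le_rfl, (List.pairwise_cons.1 hxt).1⟩)

theorem le_of_mem_next {m : ℕ} {L : List ℕ} (hL : ∀ x ∈ L, x ≤ m) :
    ∀ x ∈ next m L, x ≤ m := by
  fun_induction next m L with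
  | case1 => simp
  | case2 h t hh =>
    exact List.forall_mem_cons.2 ⟨hh, (List.forall_mem_cons.1 hL).2⟩
  | case3 => simp
  | case4 h t _ x t' hnt ih =>
    have hxt : ∀ y ∈ x :: t', y ≤ m := hnt ▸ ih (List.forall_mem_cons.1 hL).2
    exact List.forall_mem_cons.2 ⟨hxt x List.mem_cons_self, hxt⟩

theorem stmt_11 (m : ℕ) (L : List ℕ) (hsorted : L.Pairwise (· ≥ ·))
    (hle : ∀ x ∈ L, x ≤ m) :
    (next m L).Pairwise (· ≥ ·) ∧ ∀ x ∈ next m L, x ≤ m :=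
  ⟨pairwise_ge_next m hsorted, le_of_mem_next hle⟩
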